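/- arXiv:0909.3350 — 7 statements merged into one kernel-verified Lean document; each statement's English description precedes it below -/
import Mathlib

section
/- Let [H•, E, G•] be a butterfly. Define a right action of E on H₁ × G₁ by (h, g)^e = (h^{π(e)}, g^{j(e)}). Then ∂_E : H₁ × G₁ → E, (h, g) ↦ κ(h) ι(g), together with this action, is a crossed module: ∂_E((h,g)^e) = e⁻¹ ∂_E(h,g) e for all e ∈ E, and (h', g')^{∂_E(h,g)} = (h,g)⁻¹ (h',g') (h,g) for all (h,g), (h',g') ∈ H₁ × G₁. -/
theorem stmt_7_general {H₁ H₀ G₁ G₀ E : Type*} [Group H₁] [Group H₀] [Group G₁] [Group G₀] [Group E]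
    (dH : H₁ →* H₀) (actH : H₁ → H₀ → H₁)
    (hH_peiffer : ∀ g h, actH g (dH h) = h⁻¹ * g * h)
    (dG : G₁ →* G₀) (actG : G₁ → G₀ → G₁)
    (hG_peiffer : ∀ g h, actG g (dG h) = h⁻¹ * g * h)
    (κ : H₁ →* E) (ι : G₁ →* E) (π : E →* H₀) (j : E →* G₀)
    (hπκ : ∀ h, π (κ h) = dH h)
    (hjι : ∀ g, j (ι g) = dG g)
    (hjκ : ∀ h, j (κ h) = 1)
    (hkerπ : ∀ e, π e = 1 ↔ ∃ g, ι g = e)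
    (heqG : ∀ g e, ι (actG g (j e)) = e⁻¹ * ι g * e)
    (heqH : ∀ h e, κ (actH h (π e)) = e⁻¹ * κ h * e) :
    (∀ (p : H₁ × G₁) (e : E),
        κ (actH p.1 (π e)) * ι (actG p.2 (j e)) = e⁻¹ * (κ p.1 * ι p.2) * e) ∧
      (∀ p q : H₁ × G₁,
        ((actH q.1 (π (κ p.1 * ι p.2)), actG q.2 (j (κ p.1 * ι p.2))) : H₁ × G₁) =
          p⁻¹ * q * p) := by
  have hπι : ∀ g, π (ι g) = 1 := fun g => (hkerπ _).mpr ⟨g, rfl⟩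
  have hπ_boundary : ∀ p : H₁ × G₁, π (κ p.1 * ι p.2) = dH p.1 := fun p => by
    rw [map_mul, hπκ, hπι, mul_one]
  have hj_boundary : ∀ p : H₁ × G₁, j (κ p.1 * ι p.2) = dG p.2 := fun p => by
    rw [map_mul, hjκ, hjι, one_mul]
  refine ⟨fun p e => ?_, fun p q => ?_⟩
  · rw [heqH, heqG]
    group
  · rw [hπ_boundary, hj_boundary, hH_peiffer, hG_peiffer]
    rfl

theorem stmt_7 {H₁ H₀ G₁ G₀ E : Type*} [Group H₁] [Group H₀] [Group G₁] [Group G₀] [Group E]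
    (dH : H₁ →* H₀) (actH : H₁ → H₀ → H₁)
    (hH_one : ∀ g, actH g 1 = g)
    (hH_mul : ∀ g x y, actH g (x * y) = actH (actH g x) y)
    (hH_hom : ∀ g g' x, actH (g * g') x = actH g x * actH g' x)
    (hH_d : ∀ g x, dH (actH g x) = x⁻¹ * dH g * x)
    (hH_peiffer : ∀ g h, actH g (dH h) = h⁻¹ * g * h)
    (dG : G₁ →* G₀) (actG : G₁ → G₀ → G₁)
    (hG_one : ∀ g, actG g 1 = g)
    (hG_mul : ∀ g x y, actG g (x * y) = actG (actG g x) y)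
    (hG_hom : ∀ g g' x, actG (g * g') x = actG g x * actG g' x)
    (hG_d : ∀ g x, dG (actG g x) = x⁻¹ * dG g * x)
    (hG_peiffer : ∀ g h, actG g (dG h) = h⁻¹ * g * h)
    (κ : H₁ →* E) (ι : G₁ →* E) (π : E →* H₀) (j : E →* G₀)
    (hπκ : ∀ h, π (κ h) = dH h)
    (hjι : ∀ g, j (ι g) = dG g)
    (hjκ : ∀ h, j (κ h) = 1)
    (hπsurj : Function.Surjective π)
    (hιinj : Function.Injective ι)
    (hkerπ : ∀ e, π e = 1 ↔ ∃ g, ι g = e)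
    (heqG : ∀ g e, ι (actG g (j e)) = e⁻¹ * ι g * e)
    (heqH : ∀ h e, κ (actH h (π e)) = e⁻¹ * κ h * e) :
    (∀ (p : H₁ × G₁) (e : E),
        κ (actH p.1 (π e)) * ι (actG p.2 (j e)) = e⁻¹ * (κ p.1 * ι p.2) * e) ∧
      (∀ p q : H₁ × G₁,
        ((actH q.1 (π (κ p.1 * ι p.2)), actG q.2 (j (κ p.1 * ι p.2))) : H₁ × G₁) =
          p⁻¹ * q * p) :=
  stmt_7_general dH actH hH_peiffer dG actG hG_peiffer κ ι π j hπκ hjι hjκ hkerπ heqG heqH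
end

section
/- Let [H•, E, G•] be a butterfly and let ∂_E : H₁ × G₁ → E be the homomorphism (h,g) ↦ κ(h) ι(g). Then π : E → H₀ induces a group isomorphism E / im ∂_E ≅ H₀ / im ∂_H. (Both images are normal subgroups of the respective groups.) -/
theorem stmt_8 {H₁ H₀ G₁ G₀ E : Type*} [Group H₁] [Group H₀] [Group G₁] [Group G₀] [Group E]
    (dH : H₁ →* H₀) (actH : H₁ → H₀ → H₁)
    (hH_one : ∀ g, actH g 1 = g)
    (hH_mul : ∀ g x y, actH g (x * y) = actH (actH g x) y)
    (hH_hom : ∀ g g' x, actH (g * g') x = actH g x * actH g' x)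
    (hH_d : ∀ g x, dH (actH g x) = x⁻¹ * dH g * x)
    (hH_peiffer : ∀ g h, actH g (dH h) = h⁻¹ * g * h)
    (dG : G₁ →* G₀) (actG : G₁ → G₀ → G₁)
    (hG_one : ∀ g, actG g 1 = g)
    (hG_mul : ∀ g x y, actG g (x * y) = actG (actG g x) y)
    (hG_hom : ∀ g g' x, actG (g * g') x = actG g x * actG g' x)
    (hG_d : ∀ g x, dG (actG g x) = x⁻¹ * dG g * x)
    (hG_peiffer : ∀ g h, actG g (dG h) = h⁻¹ * g * h)
    (κ : H₁ →* E) (ι : G₁ →* E) (π : E →* H₀) (j : E →* G₀)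
    (hπκ : ∀ h, π (κ h) = dH h)
    (hjι : ∀ g, j (ι g) = dG g)
    (hjκ : ∀ h, j (κ h) = 1)
    (hπsurj : Function.Surjective π)
    (hιinj : Function.Injective ι)
    (hkerπ : ∀ e, π e = 1 ↔ ∃ g, ι g = e)
    (heqG : ∀ g e, ι (actG g (j e)) = e⁻¹ * ι g * e)
    (heqH : ∀ h e, κ (actH h (π e)) = e⁻¹ * κ h * e) :
    ∃ hNE : (Subgroup.closure {x : E | ∃ (h : H₁) (g : G₁), x = κ h * ι g}).Normal,
      ∃ hNH : (dH.range).Normal,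
        letI := hNE
        letI := hNH
        ∃ φ : (E ⧸ Subgroup.closure {x : E | ∃ (h : H₁) (g : G₁), x = κ h * ι g}) ≃*
            (H₀ ⧸ dH.range),
          ∀ e : E, φ (QuotientGroup.mk e) = QuotientGroup.mk (π e) := by
  classical
  set S : Set E := {x : E | ∃ (h : H₁) (g : G₁), x = κ h * ι g} with hS
  have hcomm : ∀ (h : H₁) (g : G₁), κ h * ι g = ι g * κ h := by
    intro h g
    have := heqG g (κ h)
    rw [hjκ, hG_one] at this
    calc κ h * ι g = κ h * ((κ h)⁻¹ * ι g * κ h) := by rw [← this]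
      _ = ι g * κ h := by group
  have hNH : dH.range.Normal := by
    constructor
    intro n hn g
    obtain ⟨h, rfl⟩ := hn
    exact ⟨actH h g⁻¹, by rw [hH_d]; group⟩
  have hπι : ∀ g : G₁, π (ι g) = 1 := fun g => (hkerπ (ι g)).2 ⟨g, rfl⟩
  have hkey : Subgroup.closure S = dH.range.comap π := by
    apply le_antisymm
    · rw [Subgroup.closure_le]
      rintro x ⟨h, g, rfl⟩
      simp only [Subgroup.coe_comap, Set.mem_preimage, SetLike.mem_coe, map_mul,
        hπκ, hπι, mul_one]
      exact ⟨h, rfl⟩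
    · intro e he
      obtain ⟨h, hh⟩ := he
      have : π (e * (κ h)⁻¹) = 1 := by
        rw [map_mul, map_inv, hπκ, hh]; group
      obtain ⟨g, hg⟩ := (hkerπ _).1 this
      have he' : e = κ h * ι g := by
        rw [hcomm, hg]; group
      rw [he']
      exact Subgroup.subset_closure ⟨h, g, rfl⟩
  have hNE : (Subgroup.closure S).Normal := by
    rw [hkey]; exact Subgroup.Normal.comap hNH π
  refine ⟨hNE, hNH, ?_⟩
  letI := hNE
  letI := hNH
  set f : E →* H₀ ⧸ dH.range := (QuotientGroup.mk' dH.range).comp π with hf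
  have hle : Subgroup.closure S ≤ f.ker := by
    rw [hkey]
    intro e he
    simp only [Subgroup.mem_comap] at he
    simpa [hf, MonoidHom.mem_ker, QuotientGroup.eq_one_iff] using he
  set ψ : (E ⧸ Subgroup.closure S) →* H₀ ⧸ dH.range := QuotientGroup.lift _ f hle with hψ
  have hinj : Function.Injective ψ := by
    rw [injective_iff_map_eq_one]
    intro a ha
    induction a using QuotientGroup.induction_on with
    | H e =>
      have : π e ∈ dH.range := by
        simpa [hψ, hf, QuotientGroup.eq_one_iff] using ha
      rw [QuotientGroup.eq_one_iff, hkey]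
      exact this
  have hsurj : Function.Surjective ψ := by
    intro b
    induction b using QuotientGroup.induction_on with
    | H x =>
      obtain ⟨e, rfl⟩ := hπsurj x
      exact ⟨QuotientGroup.mk e, rfl⟩
  exact ⟨MulEquiv.ofBijective ψ ⟨hinj, hsurj⟩, fun e => rfl⟩
end

section
/- Let [H•, E, G•] be a butterfly and ∂_E : H₁ × G₁ → E, (h,g) ↦ κ(h) ι(g). Then the first projection pr₁ : H₁ × G₁ → H₁ restricts to a group isomorphism ker ∂_E ≅ ker ∂_H. -/
/-! Since `ι` is injective with image `ker π`, a pair `(h, g)` with `κ h * ι g = 1` is determined by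
`h`, via `ι g = (κ h)⁻¹`, and such a `g` exists exactly when `π (κ h)⁻¹ = (∂_H h)⁻¹` is trivial. -/

section ButterflyKernel

variable {H G E K : Type*} [Group H] [Group G] [Group E] [Group K]
  {d : H →* K} {κ : H →* E} {ι : G →* E} {π : E →* K}

theorem map_fst_eq_one_of_mul_eq_one (hπκ : ∀ h, π (κ h) = d h) (hπι : ∀ g, π (ι g) = 1)
    {h : H} {g : G} (hp : κ h * ι g = 1) : d h = 1 := by
  simpa [hπκ, hπι] using congrArg π hp

def kerMulFst (hπκ : ∀ h, π (κ h) = d h) (hπι : ∀ g, π (ι g) = 1) :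
    {p : H × G // κ p.1 * ι p.2 = 1} → {h : H // d h = 1} :=
  fun p => ⟨p.val.1, map_fst_eq_one_of_mul_eq_one hπκ hπι p.prop⟩

theorem kerMulFst_injective (hπκ : ∀ h, π (κ h) = d h) (hπι : ∀ g, π (ι g) = 1)
    (hι : Function.Injective ι) : Function.Injective (kerMulFst hπκ hπι) := by
  rintro ⟨⟨h, g⟩, hp⟩ ⟨⟨h', g'⟩, hq⟩ hpq
  obtain rfl : h = h' := congrArg Subtype.val hpq
  obtain rfl : g = g' :=
    hι ((eq_inv_of_mul_eq_one_right hp).trans (eq_inv_of_mul_eq_one_right hq).symm)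
  rfl

theorem kerMulFst_surjective (hπκ : ∀ h, π (κ h) = d h) (hkerπ : ∀ e, π e = 1 ↔ ∃ g, ι g = e) :
    Function.Surjective (kerMulFst hπκ fun g => (hkerπ (ι g)).mpr ⟨g, rfl⟩) := by
  rintro ⟨h, hh⟩
  obtain ⟨g, hg⟩ := (hkerπ (κ h)⁻¹).mp (by rw [map_inv, hπκ, hh, inv_one])
  exact ⟨⟨(h, g), by rw [hg, mul_inv_cancel]⟩, rfl⟩

end ButterflyKernel

theorem stmt_9_general {H₁ H₀ G₁ E : Type*} [Group H₁] [Group H₀] [Group G₁] [Group E]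
    (dH : H₁ →* H₀)
    (κ : H₁ →* E) (ι : G₁ →* E) (π : E →* H₀)
    (hπκ : ∀ h, π (κ h) = dH h)
    (hιinj : Function.Injective ι)
    (hkerπ : ∀ e, π e = 1 ↔ ∃ g, ι g = e) :
    ∃ φ : {p : H₁ × G₁ // κ p.1 * ι p.2 = 1} ≃ {h : H₁ // dH h = 1},
      ∀ p, (φ p).val = p.val.1 :=
  ⟨Equiv.ofBijective _ ⟨kerMulFst_injective _ _ hιinj, kerMulFst_surjective hπκ hkerπ⟩,
    fun _ => rfl⟩

theorem stmt_9 {H₁ H₀ G₁ G₀ E : Type*} [Group H₁] [Group H₀] [Group G₁] [Group G₀] [Group E]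
    (dH : H₁ →* H₀) (actH : H₁ → H₀ → H₁)
    (hH_one : ∀ g, actH g 1 = g)
    (hH_mul : ∀ g x y, actH g (x * y) = actH (actH g x) y)
    (hH_hom : ∀ g g' x, actH (g * g') x = actH g x * actH g' x)
    (hH_d : ∀ g x, dH (actH g x) = x⁻¹ * dH g * x)
    (hH_peiffer : ∀ g h, actH g (dH h) = h⁻¹ * g * h)
    (dG : G₁ →* G₀) (actG : G₁ → G₀ → G₁)
    (hG_one : ∀ g, actG g 1 = g)
    (hG_mul : ∀ g x y, actG g (x * y) = actG (actG g x) y)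
    (hG_hom : ∀ g g' x, actG (g * g') x = actG g x * actG g' x)
    (hG_d : ∀ g x, dG (actG g x) = x⁻¹ * dG g * x)
    (hG_peiffer : ∀ g h, actG g (dG h) = h⁻¹ * g * h)
    (κ : H₁ →* E) (ι : G₁ →* E) (π : E →* H₀) (j : E →* G₀)
    (hπκ : ∀ h, π (κ h) = dH h)
    (hjι : ∀ g, j (ι g) = dG g)
    (hjκ : ∀ h, j (κ h) = 1)
    (hπsurj : Function.Surjective π)
    (hιinj : Function.Injective ι)
    (hkerπ : ∀ e, π e = 1 ↔ ∃ g, ι g = e)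
    (heqG : ∀ g e, ι (actG g (j e)) = e⁻¹ * ι g * e)
    (heqH : ∀ h e, κ (actH h (π e)) = e⁻¹ * κ h * e) :
    ∃ φ : {p : H₁ × G₁ // κ p.1 * ι p.2 = 1} ≃ {h : H₁ // dH h = 1},
      ∀ p, (φ p).val = p.val.1 :=
  stmt_9_general dH κ ι π hπκ hιinj hkerπ
end

section
/- Let [H•, E, G•] be a butterfly. Let H₁ ×_{H₀} E = {(h, e) ∈ H₁ × E : ∂_H(h) = π(e)} be the fiber product group. Then the map H₁ × G₁ → H₁ ×_{H₀} E given by (h, g) ↦ (h, κ(h) ι(g)) is a group isomorphism, where H₁ × G₁ is the direct product group. -/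
/-! Since `κ` is `π`-equivariant and `ι(G₁) = ker π`, conjugation by `ι g` fixes `κ h`, so the
images of `κ` and `ι` commute and `(h, g) ↦ κ h * ι g` is a homomorphism. Its fibres over `H₀` are
exactly the cosets of `ι(G₁) = ker π`, which gives bijectivity onto `H₁ ×_{H₀} E`. -/

section Butterfly

variable {H₁ H₀ G₁ E : Type*} [Group H₁] [Group H₀] [Group G₁] [Group E]

theorem commute_of_map_eq_one (κ : H₁ →* E) (π : E →* H₀) (act : H₁ → H₀ → H₁)
    (h_one : ∀ h, act h 1 = h) (h_equiv : ∀ h e, κ (act h (π e)) = e⁻¹ * κ h * e)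
    (h : H₁) {e : E} (he : π e = 1) : Commute (κ h) e := by
  have hconj := h_equiv h e
  rw [he, h_one] at hconj
  rw [Commute, SemiconjBy]
  conv_rhs => rw [hconj]
  group

theorem shear_injective (κ : H₁ →* E) {ι : G₁ →* E} (hι : Function.Injective ι) :
    Function.Injective (fun p : H₁ × G₁ => ((p.1, κ p.1 * ι p.2) : H₁ × E)) := by
  rintro ⟨h, g⟩ ⟨h', g'⟩ heq
  obtain ⟨rfl, hκι⟩ := Prod.mk.inj heq
  exact Prod.ext rfl (hι (mul_left_cancel hκι))

theorem exists_shear_eq_of_map_eq (κ : H₁ →* E) (ι : G₁ →* E) (π : E →* H₀)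
    (hker : ∀ e, π e = 1 → ∃ g, ι g = e) {q : H₁ × E} (hq : π (κ q.1) = π q.2) :
    ∃ p : H₁ × G₁, ((p.1, κ p.1 * ι p.2) : H₁ × E) = q := by
  obtain ⟨g, hg⟩ := hker ((κ q.1)⁻¹ * q.2) (by rw [map_mul, map_inv, hq, inv_mul_cancel])
  exact ⟨(q.1, g), by rw [hg, mul_inv_cancel_left]⟩

end Butterfly

theorem stmt_12_general {H₁ H₀ G₁ E : Type*} [Group H₁] [Group H₀] [Group G₁] [Group E]
    (dH : H₁ →* H₀) (actH : H₁ → H₀ → H₁)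
    (hH_one : ∀ g, actH g 1 = g)
    (κ : H₁ →* E) (ι : G₁ →* E) (π : E →* H₀)
    (hπκ : ∀ h, π (κ h) = dH h)
    (hιinj : Function.Injective ι)
    (hkerπ : ∀ e, π e = 1 ↔ ∃ g, ι g = e)
    (heqH : ∀ h e, κ (actH h (π e)) = e⁻¹ * κ h * e) :
    (∀ p : H₁ × G₁, dH p.1 = π (κ p.1 * ι p.2)) ∧
      (∀ p q : H₁ × G₁,
        (((p * q).1, κ (p * q).1 * ι (p * q).2) : H₁ × E) =
          (p.1 * q.1, (κ p.1 * ι p.2) * (κ q.1 * ι q.2))) ∧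
      Function.Injective (fun p : H₁ × G₁ => ((p.1, κ p.1 * ι p.2) : H₁ × E)) ∧
      (∀ q : H₁ × E, dH q.1 = π q.2 →
        ∃ p : H₁ × G₁, ((p.1, κ p.1 * ι p.2) : H₁ × E) = q) := by
  have hπι : ∀ g, π (ι g) = 1 := fun g => (hkerπ _).mpr ⟨g, rfl⟩
  have hcomm : ∀ h g, Commute (κ h) (ι g) :=
    fun h g => commute_of_map_eq_one κ π actH hH_one heqH h (hπι g)
  refine ⟨fun p => ?_, fun p q => ?_, shear_injective κ hιinj, fun q hq => ?_⟩
  · rw [map_mul, hπκ, hπι, mul_one]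
  · exact Prod.ext rfl (map_mul (κ.noncommCoprod ι hcomm) p q)
  · exact exists_shear_eq_of_map_eq κ ι π (fun e => (hkerπ e).mp) (by rwa [hπκ])

theorem stmt_12 {H₁ H₀ G₁ G₀ E : Type*} [Group H₁] [Group H₀] [Group G₁] [Group G₀] [Group E]
    (dH : H₁ →* H₀) (actH : H₁ → H₀ → H₁)
    (hH_one : ∀ g, actH g 1 = g)
    (hH_mul : ∀ g x y, actH g (x * y) = actH (actH g x) y)
    (hH_hom : ∀ g g' x, actH (g * g') x = actH g x * actH g' x)
    (hH_d : ∀ g x, dH (actH g x) = x⁻¹ * dH g * x)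
    (hH_peiffer : ∀ g h, actH g (dH h) = h⁻¹ * g * h)
    (dG : G₁ →* G₀) (actG : G₁ → G₀ → G₁)
    (hG_one : ∀ g, actG g 1 = g)
    (hG_mul : ∀ g x y, actG g (x * y) = actG (actG g x) y)
    (hG_hom : ∀ g g' x, actG (g * g') x = actG g x * actG g' x)
    (hG_d : ∀ g x, dG (actG g x) = x⁻¹ * dG g * x)
    (hG_peiffer : ∀ g h, actG g (dG h) = h⁻¹ * g * h)
    (κ : H₁ →* E) (ι : G₁ →* E) (π : E →* H₀) (j : E →* G₀)
    (hπκ : ∀ h, π (κ h) = dH h)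
    (hjι : ∀ g, j (ι g) = dG g)
    (hjκ : ∀ h, j (κ h) = 1)
    (hπsurj : Function.Surjective π)
    (hιinj : Function.Injective ι)
    (hkerπ : ∀ e, π e = 1 ↔ ∃ g, ι g = e)
    (heqG : ∀ g e, ι (actG g (j e)) = e⁻¹ * ι g * e)
    (heqH : ∀ h e, κ (actH h (π e)) = e⁻¹ * κ h * e) :
    (∀ p : H₁ × G₁, dH p.1 = π (κ p.1 * ι p.2)) ∧
      (∀ p q : H₁ × G₁,
        (((p * q).1, κ (p * q).1 * ι (p * q).2) : H₁ × E) =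
          (p.1 * q.1, (κ p.1 * ι p.2) * (κ q.1 * ι q.2))) ∧
      Function.Injective (fun p : H₁ × G₁ => ((p.1, κ p.1 * ι p.2) : H₁ × E)) ∧
      (∀ q : H₁ × E, dH q.1 = π q.2 →
        ∃ p : H₁ × G₁, ((p.1, κ p.1 * ι p.2) : H₁ × E) = q) :=
  stmt_12_general dH actH hH_one κ ι π hπκ hιinj hkerπ heqH
end

section
/- Let (f₁, f₀) : H• → G• be a strict morphism of crossed modules. Let H₀ act on G₁ on the right by g · x := g^{f₀(x)}, and let E = H₀ ⋉ G₁ be the corresponding semidirect product with multiplication (x, g)(x', g') = (x x', g^{f₀(x')} g'). Define π : E → H₀, (x,g) ↦ x; ι : G₁ → E, g ↦ (1, g); κ : H₁ → E, h ↦ (∂_H h, f₁(h)⁻¹); and j : E → G₀, (x, g) ↦ f₀(x) ∂_G(g). Then [H•, E, G•] with these maps is a butterfly: κ, ι, π, j are group homomorphisms, π ∘ κ = ∂_H, j ∘ ι = ∂_G, j ∘ κ = 1, π is surjective, ι is injective with ker π = ι(G₁), and the equivariance conditions ι(g^{j(e)}) = e⁻¹ ι(g) e and κ(h^{π(e)})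 = e⁻¹ κ(h) e hold. -/
def SDP (A B : Type*) : Type _ := A × B

namespace SDP

variable {A B : Type*}

def mk (a : A) (b : B) : SDP A B := (a, b)

def fst (p : SDP A B) : A := Prod.fst p

def snd (p : SDP A B) : B := Prod.snd p

theorem ext {p q : SDP A B} (h1 : p.fst = q.fst) (h2 : p.snd = q.snd) : p = q :=
  Prod.ext h1 h2

end SDP

/-- The "right-style" semidirect product group structure on `A × B`, with
multiplication `(x, g)(x', g') = (x x', ρ(g)(x') g')`, where `ρ` is a right
action of `A` on `B` by automorphisms. -/
def sdpGroup {A B : Type*} [Group A] [Group B] (ρ : B → A → B)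
    (h1 : ∀ g, ρ g 1 = g) (h2 : ∀ g x y, ρ g (x * y) = ρ (ρ g x) y)
    (h3 : ∀ g g' x, ρ (g * g') x = ρ g x * ρ g' x) : Group (SDP A B) where
  mul p q := SDP.mk (p.fst * q.fst) (ρ p.snd q.fst * q.snd)
  one := SDP.mk 1 1
  inv p := SDP.mk p.fst⁻¹ (ρ p.snd⁻¹ p.fst⁻¹)
  mul_assoc p q r := SDP.ext (mul_assoc _ _ _) (by
      show ρ (ρ p.snd q.fst * q.snd) r.fst * r.snd =
        ρ p.snd (q.fst * r.fst) * (ρ q.snd r.fst * r.snd)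
      rw [h3, h2, mul_assoc])
  one_mul p := SDP.ext (one_mul _) (by
      show ρ (1 : B) p.fst * p.snd = p.snd
      have key : ρ (1 : B) p.fst = 1 := by
        have h := h3 1 1 p.fst
        rw [one_mul] at h
        exact (left_eq_mul.mp h)
      rw [key, one_mul])
  mul_one p := SDP.ext (mul_one _) (by
      show ρ p.snd (1 : A) * 1 = p.snd
      rw [h1, mul_one])
  inv_mul_cancel p := SDP.ext (inv_mul_cancel _) (by
      show ρ (ρ p.snd⁻¹ p.fst⁻¹) p.fst * p.snd = 1
      rw [← h2, inv_mul_cancel, h1, inv_mul_cancel])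

/-! Conjugation by `e = (x, g)` in `E = H₀ ⋉ G₁` is
`(a, b) ↦ (x⁻¹ a x, (g^{f₀(x⁻¹ a x)})⁻¹ · b^{f₀ x} · g)` (`sdpGroup_conj_mk`).
For `ι k` the Peiffer identity `k^{∂_G g} = g⁻¹ k g` turns this into
`ι(k^{f₀ x · ∂_G g}) = ι(k^{j e})`. For `κ h`, the identities `f₀ ∘ ∂_H = ∂_G ∘ f₁`
and `f₁(h^x) = f₁(h)^{f₀ x}` rewrite `f₀(x⁻¹ (∂_H h) x)` as `∂_G(f₁(h^x))`, after which Peiffer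
again collapses the `G₁`-component to `f₁(h^x)⁻¹`. The remaining conditions are the same
computations without conjugation. -/

theorem act_inv_left {A B : Type*} [Group B] (ρ : B → A → B)
    (hρ : ∀ g g' x, ρ (g * g') x = ρ g x * ρ g' x) (g : B) (x : A) : ρ g⁻¹ x = (ρ g x)⁻¹ :=
  (MonoidHom.mk' (ρ · x) (hρ · · x)).map_inv g

theorem sdpGroup_conj_mk {A B : Type*} [Group A] [Group B] (ρ : B → A → B)
    (h1 : ∀ g, ρ g 1 = g) (h2 : ∀ g x y, ρ g (x * y) = ρ (ρ g x) y)
    (h3 : ∀ g g' x, ρ (g * g') x = ρ g x * ρ g' x) (e : SDP A B) (a : A) (b : B) :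
    letI := sdpGroup ρ h1 h2 h3
    e⁻¹ * SDP.mk a b * e =
      SDP.mk (e.fst⁻¹ * a * e.fst) ((ρ e.snd (e.fst⁻¹ * a * e.fst))⁻¹ * ρ b e.fst * e.snd) :=
  SDP.ext rfl <| by
    show ρ (ρ (ρ e.snd⁻¹ e.fst⁻¹) a * b) e.fst * e.snd = _
    rw [h3, ← h2, ← h2, act_inv_left ρ h3, ← mul_assoc]
    rfl

theorem act_mul_map {G₁ G₀ : Type*} [Group G₁] [Group G₀] (dG : G₁ →* G₀)
    (actG : G₁ → G₀ → G₁) (hG_mul : ∀ g x y, actG g (x * y) = actG (actG g x) y)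
    (hG_peiffer : ∀ g h, actG g (dG h) = h⁻¹ * g * h) (g k : G₁) (x : G₀) :
    actG g (x * dG k) = k⁻¹ * actG g x * k := by
  rw [hG_mul, hG_peiffer]

theorem mul_mul_map_act_mul {G₁ G₀ : Type*} [Group G₁] [Group G₀] (dG : G₁ →* G₀)
    (actG : G₁ → G₀ → G₁) (hG_d : ∀ g x, dG (actG g x) = x⁻¹ * dG g * x)
    (x y : G₀) (g g' : G₁) :
    x * y * dG (actG g y * g') = x * dG g * (y * dG g') := by
  rw [map_mul, hG_d]
  group

theorem stmt_14 {H₁ H₀ G₁ G₀ : Type*} [Group H₁] [Group H₀] [Group G₁] [Group G₀]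
    (dH : H₁ →* H₀) (actH : H₁ → H₀ → H₁)
    (hH_d : ∀ g x, dH (actH g x) = x⁻¹ * dH g * x)
    (dG : G₁ →* G₀) (actG : G₁ → G₀ → G₁)
    (hG_one : ∀ g, actG g 1 = g)
    (hG_mul : ∀ g x y, actG g (x * y) = actG (actG g x) y)
    (hG_hom : ∀ g g' x, actG (g * g') x = actG g x * actG g' x)
    (hG_d : ∀ g x, dG (actG g x) = x⁻¹ * dG g * x)
    (hG_peiffer : ∀ g h, actG g (dG h) = h⁻¹ * g * h)
    (f₁ : H₁ →* G₁) (f₀ : H₀ →* G₀)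
    (hcomm : ∀ h, f₀ (dH h) = dG (f₁ h))
    (hequiv : ∀ h x, f₁ (actH h x) = actG (f₁ h) (f₀ x)) :
    letI : Group (SDP H₀ G₁) :=
      sdpGroup (fun g x => actG g (f₀ x))
        (by intro g; show actG g (f₀ 1) = g; rw [map_one]; exact hG_one g)
        (by intro g x y; show actG g (f₀ (x * y)) = actG (actG g (f₀ x)) (f₀ y)
            rw [map_mul]; exact hG_mul g _ _)
        (by intro g g' x; exact hG_hom g g' (f₀ x))
    let π' : SDP H₀ G₁ → H₀ := SDP.fst
    let ι' : G₁ → SDP H₀ G₁ := fun g => SDP.mk 1 g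
    let κ' : H₁ → SDP H₀ G₁ := fun h => SDP.mk (dH h) (f₁ h)⁻¹
    let j' : SDP H₀ G₁ → G₀ := fun p => f₀ p.fst * dG p.snd
    (∀ h h', κ' (h * h') = κ' h * κ' h') ∧
      (∀ g g', ι' (g * g') = ι' g * ι' g') ∧
      (∀ p q, π' (p * q) = π' p * π' q) ∧
      (∀ p q, j' (p * q) = j' p * j' q) ∧
      (∀ h, π' (κ' h) = dH h) ∧
      (∀ g, j' (ι' g) = dG g) ∧
      (∀ h, j' (κ' h) = 1) ∧
      Function.Surjective π' ∧
      Function.Injective ι' ∧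
      (∀ p, π' p = 1 ↔ ∃ g, ι' g = p) ∧
      (∀ g e, ι' (actG g (j' e)) = e⁻¹ * ι' g * e) ∧
      (∀ h e, κ' (actH h (π' e)) = e⁻¹ * κ' h * e) := by
  intro π' ι' κ' j'
  have conj := sdpGroup_conj_mk (fun g x => actG g (f₀ x))
    (fun g => by simp only [map_one, hG_one]) (fun g x y => by simp only [map_mul, hG_mul])
    (fun g g' x => hG_hom g g' (f₀ x))
  refine ⟨fun h h' => SDP.ext (map_mul dH h h') ?_, fun g g' => SDP.ext (one_mul 1).symm ?_,
    fun p q => rfl, fun p q => ?_, fun h => rfl, fun g => ?_, fun h => ?_,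
    fun x => ⟨SDP.mk x 1, rfl⟩, fun g g' hg => congrArg SDP.snd hg,
    fun p => ⟨fun hp => ⟨p.snd, SDP.ext hp.symm rfl⟩, by rintro ⟨g, rfl⟩; rfl⟩,
    fun g e => ?_, fun h e => ?_⟩
  · change (f₁ (h * h'))⁻¹ = actG (f₁ h)⁻¹ (f₀ (dH h')) * (f₁ h')⁻¹
    rw [hcomm, hG_peiffer, map_mul]
    group
  · change g * g' = actG g (f₀ 1) * g'
    rw [map_one, hG_one]
  · change f₀ (p.fst * q.fst) * dG (actG p.snd (f₀ q.fst) * q.snd) = _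
    rw [map_mul, mul_mul_map_act_mul dG actG hG_d]
  · change f₀ 1 * dG g = dG g
    rw [map_one, one_mul]
  · change f₀ (dH h) * dG (f₁ h)⁻¹ = 1
    rw [hcomm, map_inv, mul_inv_cancel]
  · dsimp only [ι', j']
    rw [conj, act_mul_map dG actG hG_mul hG_peiffer, mul_one, inv_mul_cancel, map_one, hG_one]
  · dsimp only [κ', π']
    rw [conj, ← hH_d, hcomm, hequiv, hG_peiffer, act_inv_left actG hG_hom]
    group
end

section
/- Let ∂ : G₁ → G₀ be a crossed module, let P be a nonempty set with a free and transitive right G₁-action, and let s : P → G₀ be equivariant: s(p g) = s(p) ∂(g) for all p ∈ P, g ∈ G₁. Define g · p := p · g^{s(p)}. Then this defines a left action of G₁ on P (i.e., 1 · p = p and g · (g' · p) = (g g') · p), and the left and right actions commute: (g · p) · g' = g · (p · g') for all g, g' ∈ G₁, p ∈ P. Hence P is a G₁-bitorsor. -/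
/-! The left action is the right action twisted by `s`: `g · p = p · g^{s(p)}`. Moving the base
point `p` to `p · h` changes the twist by conjugation, `g^{s(p h)} = g^{s(p) ∂h} = h⁻¹ g^{s(p)} h`
(Peiffer identity), so `g · (p · h) = p · (g^{s(p)} h)`. Both the action law and the commutation of
the two actions are immediate from this formula. -/

theorem act_one_left_of_map_mul {G₁ X : Type*} [Group G₁] {act : G₁ → X → G₁}
    (hact_hom : ∀ g g' x, act (g * g') x = act g x * act g' x) (x : X) : act 1 x = 1 :=
  (MonoidHom.mk' (act · x) fun g g' => hact_hom g g' x).map_one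

section CrossedModule

variable {G₁ G₀ : Type*} [Group G₁] [Group G₀] {d : G₁ →* G₀} {act : G₁ → G₀ → G₁}

theorem act_mul_map_s16 (hact_mul : ∀ g x y, act g (x * y) = act (act g x) y)
    (hact_peiffer : ∀ g h, act g (d h) = h⁻¹ * g * h) (g : G₁) (x : G₀) (h : G₁) :
    act g (x * d h) = h⁻¹ * act g x * h := by
  rw [hact_mul, hact_peiffer]

variable {P : Type*} {r : P → G₁ → P} {s : P → G₀}

theorem twisted_act_r (hact_mul : ∀ g x y, act g (x * y) = act (act g x) y)
    (hact_peiffer : ∀ g h, act g (d h) = h⁻¹ * g * h)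
    (hr_mul : ∀ p g g', r (r p g) g' = r p (g * g'))
    (hs : ∀ p g, s (r p g) = s p * d g) (g h : G₁) (p : P) :
    r (r p h) (act g (s (r p h))) = r p (act g (s p) * h) := by
  rw [hr_mul, hs, act_mul_map_s16 hact_mul hact_peiffer, ← mul_assoc, mul_inv_cancel_left]

end CrossedModule

theorem stmt_16_general {G₁ G₀ : Type*} [Group G₁] [Group G₀] (d : G₁ →* G₀) (act : G₁ → G₀ → G₁)
    (hact_mul : ∀ g x y, act g (x * y) = act (act g x) y)
    (hact_hom : ∀ g g' x, act (g * g') x = act g x * act g' x)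
    (hact_peiffer : ∀ g h, act g (d h) = h⁻¹ * g * h)
    {P : Type*}
    (r : P → G₁ → P)
    (hr_one : ∀ p, r p 1 = p)
    (hr_mul : ∀ p g g', r (r p g) g' = r p (g * g'))
    (s : P → G₀) (hs : ∀ p g, s (r p g) = s p * d g) :
    let l : G₁ → P → P := fun g p => r p (act g (s p))
    (∀ p, l 1 p = p) ∧
      (∀ g g' p, l g (l g' p) = l (g * g') p) ∧
      (∀ g g' p, r (l g p) g' = l g (r p g')) := by
  have twist := twisted_act_r hact_mul hact_peiffer hr_mul hs
  refine ⟨fun p => ?_, fun g g' p => ?_, fun g g' p => ?_⟩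
  · simp only [act_one_left_of_map_mul hact_hom, hr_one]
  · simp only [twist, hact_hom]
  · exact (hr_mul _ _ _).trans (twist g g' p).symm

theorem stmt_16 {G₁ G₀ : Type*} [Group G₁] [Group G₀] (d : G₁ →* G₀) (act : G₁ → G₀ → G₁)
    (hact_one : ∀ g, act g 1 = g)
    (hact_mul : ∀ g x y, act g (x * y) = act (act g x) y)
    (hact_hom : ∀ g g' x, act (g * g') x = act g x * act g' x)
    (hact_d : ∀ g x, d (act g x) = x⁻¹ * d g * x)
    (hact_peiffer : ∀ g h, act g (d h) = h⁻¹ * g * h)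
    {P : Type*} (hP : Nonempty P)
    (r : P → G₁ → P)
    (hr_one : ∀ p, r p 1 = p)
    (hr_mul : ∀ p g g', r (r p g) g' = r p (g * g'))
    (hfree : ∀ p g, r p g = p → g = 1)
    (htrans : ∀ p q : P, ∃ g, r p g = q)
    (s : P → G₀) (hs : ∀ p g, s (r p g) = s p * d g) :
    let l : G₁ → P → P := fun g p => r p (act g (s p))
    (∀ p, l 1 p = p) ∧
      (∀ g g' p, l g (l g' p) = l (g * g') p) ∧
      (∀ g g' p, r (l g p) g' = l g (r p g')) :=
  stmt_16_general d act hact_mul hact_hom hact_peiffer r hr_one hr_mul s hs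
end

section
/- Let ∂ : G₁ → G₀ be a crossed module and let (P, s) and (Q, t) be (G₁, G₀)-torsors, where Q is given the left G₁-action g · q := q g^{t(q)}. Consider the contracted product P ×^{G₁} Q, the quotient of P × Q by the relation (p g, q) ∼ (p, g · q) for g ∈ G₁. Then the map (p, q) ↦ s(p) t(q) descends to a well-defined map s ∧ t : P ×^{G₁} Q → G₀, and it is equivariant for the right G₁-action on P ×^{G₁} Q induced by [p, q] · g = [p, q g]: one has (s ∧ t)([p, q g]) = (s ∧ t)([p, q]) ∂(g). -/
/-! Twisting `g` by `t q` before acting on the right turns the value of `t` into `∂g · t q`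
(by `∂(g^x) = x⁻¹ (∂g) x`), so moving `g` from `p` to `q` leaves `s p * t q` unchanged. -/

theorem map_rightAct_act_eq_mul {G₁ G₀ Q : Type*} [Group G₁] [Group G₀] (d : G₁ →* G₀)
    (act : G₁ → G₀ → G₁) (hact_d : ∀ g x, d (act g x) = x⁻¹ * d g * x)
    (rQ : Q → G₁ → Q) (t : Q → G₀) (ht : ∀ q g, t (rQ q g) = t q * d g) (q : Q) (g : G₁) :
    t (rQ q (act g (t q))) = d g * t q := by
  rw [ht, hact_d, mul_assoc, mul_inv_cancel_left]

theorem stmt_17_general {G₁ G₀ : Type*} [Group G₁] [Group G₀] (d : G₁ →* G₀) (act : G₁ → G₀ → G₁)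
    (hact_d : ∀ g x, d (act g x) = x⁻¹ * d g * x)
    {P Q : Type*}
    (rP : P → G₁ → P)
    (s : P → G₀) (hs : ∀ p g, s (rP p g) = s p * d g)
    (rQ : Q → G₁ → Q)
    (t : Q → G₀) (ht : ∀ q g, t (rQ q g) = t q * d g) :
    let lQ : G₁ → Q → Q := fun g q => rQ q (act g (t q))
    let R : (P × Q) → (P × Q) → Prop :=
      fun a b => ∃ g, a.1 = rP b.1 g ∧ b.2 = lQ g a.2
    ∃ f : Quot R → G₀,
      (∀ (p : P) (q : Q), f (Quot.mk R (p, q)) = s p * t q) ∧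
      (∀ (p : P) (q : Q) (g : G₁),
        f (Quot.mk R (p, rQ q g)) = f (Quot.mk R (p, q)) * d g) := by
  intro lQ R
  have resp : ∀ a b, R a b → s a.1 * t a.2 = s b.1 * t b.2 := by
    rintro ⟨p', q⟩ ⟨p, q'⟩ ⟨g, hp : p' = rP p g, hq : q' = rQ q (act g (t q))⟩
    simp only [hp, hq, hs, map_rightAct_act_eq_mul d act hact_d rQ t ht, mul_assoc]
  refine ⟨Quot.lift (fun a => s a.1 * t a.2) resp, fun _ _ => rfl, fun p q g => ?_⟩
  show s p * t (rQ q g) = s p * t q * d g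
  rw [ht, mul_assoc]

theorem stmt_17 {G₁ G₀ : Type*} [Group G₁] [Group G₀] (d : G₁ →* G₀) (act : G₁ → G₀ → G₁)
    (hact_one : ∀ g, act g 1 = g)
    (hact_mul : ∀ g x y, act g (x * y) = act (act g x) y)
    (hact_hom : ∀ g g' x, act (g * g') x = act g x * act g' x)
    (hact_d : ∀ g x, d (act g x) = x⁻¹ * d g * x)
    (hact_peiffer : ∀ g h, act g (d h) = h⁻¹ * g * h)
    {P Q : Type*} (hP : Nonempty P) (hQ : Nonempty Q)
    (rP : P → G₁ → P)
    (hrP_one : ∀ p, rP p 1 = p)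
    (hrP_mul : ∀ p g g', rP (rP p g) g' = rP p (g * g'))
    (hPfree : ∀ p g, rP p g = p → g = 1)
    (hPtrans : ∀ p p' : P, ∃ g, rP p g = p')
    (s : P → G₀) (hs : ∀ p g, s (rP p g) = s p * d g)
    (rQ : Q → G₁ → Q)
    (hrQ_one : ∀ q, rQ q 1 = q)
    (hrQ_mul : ∀ q g g', rQ (rQ q g) g' = rQ q (g * g'))
    (hQfree : ∀ q g, rQ q g = q → g = 1)
    (hQtrans : ∀ q q' : Q, ∃ g, rQ q g = q')
    (t : Q → G₀) (ht : ∀ q g, t (rQ q g) = t q * d g) :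
    let lQ : G₁ → Q → Q := fun g q => rQ q (act g (t q))
    let R : (P × Q) → (P × Q) → Prop :=
      fun a b => ∃ g, a.1 = rP b.1 g ∧ b.2 = lQ g a.2
    ∃ f : Quot R → G₀,
      (∀ (p : P) (q : Q), f (Quot.mk R (p, q)) = s p * t q) ∧
      (∀ (p : P) (q : Q) (g : G₁),
        f (Quot.mk R (p, rQ q g)) = f (Quot.mk R (p, q)) * d g) :=
  stmt_17_general d act hact_d rP s hs rQ t ht
end
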